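/- arXiv:1508.04272 — 2 statements merged into one kernel-verified Lean document; each statement's English description precedes it below -/
import Mathlib

section
/- For all N ≥ 2, Ψ([N]) = (Φ(4, N+1) − 1)/2, where [N] = {0, 1, ..., N−1}, Ψ(E) := sup_{L ∈ ℕ} [ (1−L)·2^L − 1 + Σ_{n ∈ E} 2^{min(∇_4(n), L)} ], ∇_4(n) = max{k ≥ 0 : k(k+1)/2 ≤ n}, and Φ(4, M) = Σ_{n=0}^{M−1} 2^{∇_4(n)}. -/
/-- `∇_4(n) := max{k ≥ 0 : k(k+1)/2 ≤ n}`. -/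
def nabla4 (n : ℕ) : ℕ := Nat.findGreatest (fun k => Nat.choose (k + 1) 2 ≤ n) n

/-- `Φ(4, M) := Σ_{n=0}^{M-1} 2^{∇_4(n)}`. -/
def Phi4 (M : ℕ) : ℕ := ∑ n ∈ Finset.range M, 2 ^ nabla4 n

/-- `Ψ_L(E) := (1−L)·2^L − 1 + Σ_{n ∈ E} 2^{min(∇_4(n), L)}`, an integer. -/
def PsiL (E : Finset ℕ) (L : ℕ) : ℤ :=
  (1 - (L : ℤ)) * 2 ^ L - 1 + ∑ n ∈ E, 2 ^ min (nabla4 n) L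

/-- `Ψ(E) := sup_{L ∈ ℕ} Ψ_L(E)`. -/
noncomputable def Psi (E : Finset ℕ) : ℤ := sSup (Set.range (PsiL E))

/-! Raising `L` by one adds `2 ^ L` for each `n ∈ E` with `∇₄ n > L` and changes the leading
term by `-(L + 1) 2 ^ L`. For `E = [N]` that count is `N - (L+1)(L+2)/2`, so the increments
are nonnegative while `L + 2 ≤ ∇₄ N` and nonpositive afterwards: `Ψ` is attained at
`L = ∇₄ N - 1`. Summing the increments gives `Ψ_L([N]) = 2 ^ L (N - L(L+1)/2)` for
`L ≤ ∇₄ N`, while `Φ(4, N+1) = Σ_{n ≤ N} 2 ^ min(∇₄ n, ∇₄ N)` is expressed through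
`Ψ_{∇₄ N}([N+1])`. -/

open Finset

theorem isGreatest_range_of_le_succ_of_succ_le {α : Type*} [Preorder α] {f : ℕ → α} {m : ℕ}
    (hup : ∀ n < m, f n ≤ f (n + 1)) (hdown : ∀ n ≥ m, f (n + 1) ≤ f n) :
    IsGreatest (Set.range f) (f m) := by
  refine ⟨Set.mem_range_self m, Set.forall_mem_range.2 fun n => ?_⟩
  rcases le_total n m with hnm | hmn
  · induction hnm using Nat.decreasingInduction with
    | self => exact le_rfl
    | of_succ k hk ih => exact (hup k hk).trans ih
  · exact Nat.rel_of_forall_rel_succ_of_le_of_le (· ≥ ·) hdown le_rfl hmn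

theorem choose_two_succ (k : ℕ) : (k + 2).choose 2 = (k + 1).choose 2 + (k + 1) := by
  rw [Nat.choose_succ_succ', Nat.choose_one_right, add_comm]

theorem self_le_choose_two (k : ℕ) : k ≤ (k + 1).choose 2 := by
  induction k with
  | zero => simp
  | succ k ih => rw [choose_two_succ]; omega

theorem le_nabla4_iff {k n : ℕ} : k ≤ nabla4 n ↔ (k + 1).choose 2 ≤ n := by
  refine ⟨fun h => ?_, fun h => Nat.le_findGreatest ((self_le_choose_two k).trans h) h⟩
  have hspec : (nabla4 n + 1).choose 2 ≤ n :=
    Nat.findGreatest_spec (P := fun k => (k + 1).choose 2 ≤ n) (Nat.zero_le n) (by simp)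
  exact (Nat.choose_le_choose 2 (by omega)).trans hspec

theorem nabla4_mono : Monotone nabla4 := fun _ _ h =>
  le_nabla4_iff.2 ((le_nabla4_iff.1 le_rfl).trans h)

theorem psiL_zero (E : Finset ℕ) : PsiL E 0 = #E := by
  simp [PsiL]

theorem psiL_succ (E : Finset ℕ) (L : ℕ) :
    PsiL E (L + 1) = PsiL E L + 2 ^ L * (#{n ∈ E | L < nabla4 n} - (L + 1)) := by
  have hterm : ∀ n, (2 : ℤ) ^ min (nabla4 n) (L + 1)
      = 2 ^ min (nabla4 n) L + if L < nabla4 n then 2 ^ L else 0 := by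
    intro n
    split_ifs with h
    · rw [min_eq_right h, min_eq_right h.le, pow_succ]; ring
    · rw [min_eq_left (by omega), min_eq_left (by omega), add_zero]
  simp only [PsiL, hterm, sum_add_distrib, ← sum_filter, sum_const, nsmul_eq_mul]
  push_cast
  ring

theorem card_filter_range_lt_nabla4 (N L : ℕ) :
    #{n ∈ range N | L < nabla4 n} = N - (L + 2).choose 2 := by
  have : ({n ∈ range N | L < nabla4 n} : Finset ℕ) = Ico ((L + 2).choose 2) N := by
    ext n
    rw [mem_filter, mem_Ico, mem_range, Nat.lt_iff_add_one_le (m := L), le_nabla4_iff, and_comm]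
  rw [this, Nat.card_Ico]

theorem psiL_range_of_le_nabla4 {N L : ℕ} (h : L ≤ nabla4 N) :
    PsiL (range N) L = 2 ^ L * (N - (L + 1).choose 2) := by
  induction L with
  | zero => simp [psiL_zero]
  | succ L ih =>
    have hT : (L + 2).choose 2 ≤ N := le_nabla4_iff.1 h
    rw [psiL_succ, ih (by omega), card_filter_range_lt_nabla4, Nat.cast_sub hT, choose_two_succ]
    push_cast
    ring

theorem phi4_succ_eq (N : ℕ) : (Phi4 (N + 1) : ℤ)
    = PsiL (range (N + 1)) (nabla4 N) + ((nabla4 N : ℤ) - 1) * 2 ^ nabla4 N + 1 := by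
  have : ∀ n ∈ range (N + 1), (2 : ℤ) ^ min (nabla4 n) (nabla4 N) = 2 ^ nabla4 n := fun n hn =>
    by rw [min_eq_left (nabla4_mono (Nat.lt_succ_iff.1 (mem_range.1 hn)))]
  rw [PsiL, sum_congr rfl this, Phi4]
  push_cast
  ring

theorem two_mul_psiL_range_nabla4_sub_one (N : ℕ) :
    2 * PsiL (range N) (nabla4 N - 1) = Phi4 (N + 1) - 1 := by
  rcases Nat.eq_zero_or_pos N with rfl | hN
  · simp [psiL_zero, Phi4, nabla4]
  have hK : 1 ≤ nabla4 N := le_nabla4_iff.2 (by norm_num; omega)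
  obtain ⟨k, hk⟩ : ∃ k, nabla4 N = k + 1 := ⟨nabla4 N - 1, by omega⟩
  rw [phi4_succ_eq, psiL_range_of_le_nabla4 (nabla4_mono N.le_succ), hk, Nat.add_sub_cancel,
    psiL_range_of_le_nabla4 (by omega), choose_two_succ k]
  push_cast
  ring

theorem isGreatest_range_psiL_range (N : ℕ) :
    IsGreatest (Set.range (PsiL (range N))) (PsiL (range N) (nabla4 N - 1)) := by
  refine isGreatest_range_of_le_succ_of_succ_le (fun L hL => ?_) (fun L hL => ?_)
  · have : (L + 2).choose 2 + (L + 2) ≤ N := by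
      rw [← choose_two_succ]; exact le_nabla4_iff.1 (by omega)
    rw [psiL_succ, card_filter_range_lt_nabla4]
    exact le_add_of_nonneg_right (mul_nonneg (by positivity) (by omega))
  · have : N < (L + 2).choose 2 + (L + 2) := by
      rw [← choose_two_succ, ← not_le, ← le_nabla4_iff]; omega
    rw [psiL_succ, card_filter_range_lt_nabla4]
    exact add_le_of_nonpos_right (mul_nonpos_of_nonneg_of_nonpos (by positivity) (by omega))

theorem psi_range_eq_general (N : ℕ) :
    Psi (Finset.range N) = ((Phi4 (N + 1) : ℤ) - 1) / 2 := by
  rw [Psi, (isGreatest_range_psiL_range N).csSup_eq, ← two_mul_psiL_range_nabla4_sub_one,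
    Int.mul_ediv_cancel_left _ two_ne_zero]

/-- For all `N ≥ 2`, `Ψ([N]) = (Φ(4, N+1) − 1)/2`. -/
theorem psi_range_eq (N : ℕ) (hN : 2 ≤ N) :
    Psi (Finset.range N) = ((Phi4 (N + 1) : ℤ) - 1) / 2 :=
  psi_range_eq_general N
end

section
/- For p ≥ 5 and m ≥ t ≥ 0 with t + 1 ≤ m − 1 and m ≥ p − 1, one has Δ_p(m) + Δ_{p−1}(t) + 1 ≥ Δ_p(m−1) + Δ_{p−1}(m−1) + Δ_{p−1}(t+1) + 2, where Δ_q(k) := C(k+q−3, q−2). -/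
/-- `Δ_q(k) := C(k+q-3, q-2)`. -/
def Delta (q k : ℕ) : ℕ := Nat.choose (k + q - 3) (q - 2)

theorem Delta_succ {q : ℕ} (hq : 3 ≤ q) (k : ℕ) :
    Delta q (k + 1) = Delta q k + Delta (q - 1) (k + 1) := by
  obtain ⟨r, rfl⟩ : ∃ r, q = r + 3 := ⟨q - 3, by omega⟩
  have hpascal := Nat.choose_succ_succ' (k + r) r
  simp only [Delta, show k + 1 + (r + 3) - 3 = k + r + 1 by omega,
    show k + (r + 3) - 3 = k + r by omega, show r + 3 - 2 = r + 1 by omega,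
    show k + 1 + (r + 3 - 1) - 3 = k + r by omega, show r + 3 - 1 - 2 = r by omega]
  omega

theorem Delta_strictMono {q : ℕ} (hq : 3 ≤ q) : StrictMono (Delta q) := by
  refine strictMono_nat_of_lt_succ fun k => ?_
  rw [Delta_succ hq]
  have hpos : 0 < Delta (q - 1) (k + 1) := Nat.choose_pos (by omega)
  omega

theorem case_one_inequality_general (p m t : ℕ) (hp : 5 ≤ p)
    (ht : t + 1 ≤ m - 1) :
    Delta p m + Delta (p - 1) t + 1 ≥
      Delta p (m - 1) + Delta (p - 1) (m - 1) + Delta (p - 1) (t + 1) + 2 := by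
  obtain ⟨n, rfl⟩ : ∃ n, m = n + 1 := ⟨m - 1, by omega⟩
  rw [Nat.add_sub_cancel] at ht ⊢
  have hm := Delta_succ (q := p) (by omega) n
  have hm' := Delta_succ (q := p - 1) (by omega) n
  have ht' := Delta_succ (q := p - 1) (by omega) t
  have hlt : Delta (p - 1 - 1) (t + 1) < Delta (p - 1 - 1) (n + 1) :=
    Delta_strictMono (by omega) (by omega)
  omega

/-- Key counting inequality for Case 1 of the induction. -/
theorem case_one_inequality (p m t : ℕ) (hp : 5 ≤ p) (htm : t ≤ m)
    (ht : t + 1 ≤ m - 1) (hm : p - 1 ≤ m) :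
    Delta p m + Delta (p - 1) t + 1 ≥
      Delta p (m - 1) + Delta (p - 1) (m - 1) + Delta (p - 1) (t + 1) + 2 :=
  case_one_inequality_general p m t hp ht
end
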